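/- Assume p ≠ 2 and let ψ be the quadratic character of F_q^× with ψ(0) = 0. Then the Fourier transform of the function x ↦ ψ(Disc(x)) on binary quadratic forms satisfies: \hat{(ψ∘Disc)}(y) = q^{-1} − q^{-2} if Disc(y) = 0, and \hat{(ψ∘Disc)}(y) = −q^{-2} if Disc(y) ≠ 0. In particular, this Fourier transform does not vanish on the singular set. -/

import Mathlib

open scoped Classical
open MvPolynomial Matrix

noncomputable section

/-- The standard additive character `t ↦ exp(2πi·Tr_{F/F_p}(t)/p)` of a finite field `F`
of characteristic `p`. -/
def psiF (p : ℕ) [Fact p.Prime] (F : Type*) [Field F] [Fintype F] [CharP F p] (t : F) : ℂ :=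
  letI : Algebra (ZMod p) F := ZMod.algebra F p
  Complex.exp (2 * Real.pi * Complex.I * ((Algebra.trace (ZMod p) F t).val : ℂ) / (p : ℂ))

variable {F : Type*} [Field F] [Fintype F]

/-- The bilinear form `[x,x'] = aa' + bb'/2 + cc'` on binary quadratic forms. -/
def bformBQ (x y : Fin 3 → F) : F := x 0 * y 0 + x 1 * y 1 / 2 + x 2 * y 2

/-- The Fourier transform on the space of binary quadratic forms over `F`. -/
def FTBQ (p : ℕ) [Fact p.Prime] [CharP F p] (Φ : (Fin 3 → F) → ℂ) (y : Fin 3 → F) : ℂ :=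
  ((Fintype.card F : ℂ) ^ 3)⁻¹ * ∑ x : Fin 3 → F, Φ x * psiF p F (bformBQ x y)

/-- The discriminant `b² - 4ac` of a binary quadratic form. -/
def DiscBQ (x : Fin 3 → F) : F := (x 1)^2 - 4 * x 0 * x 2

/-- The quadratic character of `F`, extended by `0 ↦ 0`, with values in `ℂ`. -/
def qchar (a : F) : ℂ := if a = 0 then 0 else if IsSquare a then 1 else -1

/-!
Writing `g` for the Gauss sum of the quadratic character `χ` and the additive character `ψ`,
the identity `χ(D) g = ∑ᵤ χ(u) ψ(uD)` linearizes the character of the discriminant: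
`g ∑ₓ χ(Disc x) ψ[x,y] = ∑ᵤ χ(u) ∑ₓ ψ(u Disc x + [x,y])`. For `u ≠ 0` the inner sum over
`x = (a,b,c)` is elementary: the phase is linear in `a`, so summing over `a` forces
`c = y₀/(4u)`, and the remaining quadratic sum in `b` equals `q χ(u) g ψ(-Disc y/(16u))`.
As `χ(u)² = 1`, the Gauss sum cancels, leaving `q ∑_{u ≠ 0} ψ(-Disc y/(16u))`, which is
`q(q - 1)` or `-q` according as `Disc y` vanishes or not.
-/

open Finset AddChar

section CharacterSums

variable {R : Type*} [CommRing R]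

variable (R) in
abbrev quadraticCharIn : MulChar F R := (quadraticChar F).ringHomComp (Int.castRingHom R)

theorem quadraticCharIn_isQuadratic : (quadraticCharIn (F := F) R).IsQuadratic :=
  (quadraticChar_isQuadratic F).comp _

theorem MulChar.IsQuadratic.sum_mul_addChar_mul_of_ne_zero {χ : MulChar F R}
    (hχ : χ.IsQuadratic) (ψ : AddChar F R) {D : F} (hD : D ≠ 0) :
    ∑ u, χ u * ψ (u * D) = χ D * gaussSum χ ψ := by
  have h := gaussSum_mulShift_eq χ ψ (Units.mk0 D hD)
  rw [hχ.inv] at h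
  simpa [gaussSum, mul_comm D] using h

theorem quadraticCharIn_ne_one [CharZero R] (hF : ringChar F ≠ 2) :
    quadraticCharIn (F := F) R ≠ 1 := by
  obtain ⟨a, ha⟩ := quadraticChar_exists_neg_one' hF
  intro h
  have := congrArg (· a) h
  norm_num [ha] at this

variable [IsDomain R]

theorem MulChar.IsQuadratic.sum_mul_addChar_mul {χ : MulChar F R} (hχ : χ.IsQuadratic)
    (hχ₁ : χ ≠ 1) (ψ : AddChar F R) (D : F) :
    ∑ u, χ u * ψ (u * D) = χ D * gaussSum χ ψ := by
  by_cases hD : D = 0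
  · simp [hD, MulChar.sum_eq_zero_of_ne_one hχ₁]
  · exact hχ.sum_mul_addChar_mul_of_ne_zero ψ hD

variable {ψ : AddChar F R}

theorem sum_addChar_mul_sq (hF : ringChar F ≠ 2) (hψ : ψ.IsPrimitive) {u : F} (hu : u ≠ 0) :
    ∑ b, ψ (u * b ^ 2) = quadraticCharIn R u * gaussSum (quadraticCharIn R) ψ := by
  have hcard (s : F) : (#{b | b ^ 2 = s} : R) = quadraticCharIn R s + 1 := by
    have h := quadraticChar_card_sqrts hF s
    rw [Set.toFinset_ofPred] at h
    simpa using congrArg (Int.cast : ℤ → R) h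
  calc ∑ b, ψ (u * b ^ 2)
      = ∑ s, (quadraticCharIn R s + 1) * ψ (s * u) := by
        rw [← sum_fiberwise' univ (· ^ 2) (fun s => ψ (u * s))]
        simp_rw [sum_const, nsmul_eq_mul, hcard, mul_comm u]
    _ = ∑ s, quadraticCharIn R s * ψ (s * u) + ∑ s, ψ (s * u) := by
        simp only [add_mul, one_mul, sum_add_distrib]
    _ = quadraticCharIn R u * gaussSum (quadraticCharIn R) ψ := by
        rw [quadraticCharIn_isQuadratic.sum_mul_addChar_mul_of_ne_zero ψ hu,
          sum_mulShift u hψ, if_neg hu, Nat.cast_zero, add_zero]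

theorem sum_addChar_quadratic (hF : ringChar F ≠ 2) (hψ : ψ.IsPrimitive) {u : F} (hu : u ≠ 0)
    (β : F) :
    ∑ b, ψ (u * b ^ 2 + β * b) =
      quadraticCharIn R u * gaussSum (quadraticCharIn R) ψ * ψ (-β ^ 2 / (4 * u)) := by
  have h2 : (2 : F) ≠ 0 := Ring.two_ne_zero hF
  have h4 : (4 : F) ≠ 0 := by simpa [show (4 : F) = 2 ^ 2 by norm_num] using h2
  have hsq (b : F) : u * b ^ 2 + β * b = u * (b + β / (2 * u)) ^ 2 + -β ^ 2 / (4 * u) := by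
    field_simp
    ring
  simp_rw [hsq, map_add_eq_mul, ← sum_mul]
  rw [Fintype.sum_equiv (Equiv.addRight (β / (2 * u))) (fun b => ψ (u * (b + β / (2 * u)) ^ 2))
    (fun t => ψ (u * t ^ 2)) (fun _ => rfl), sum_addChar_mul_sq hF hψ hu]

theorem sum_sum_addChar_linear (hψ : ψ.IsPrimitive) {k : F} (hk : k ≠ 0) (s t : F) :
    ∑ a, ∑ c, ψ (a * (s - k * c) + c * t) = Fintype.card F * ψ (s / k * t) := by
  have hroot (c : F) : s - k * c = 0 ↔ c = s / k := by
    rw [sub_eq_zero, eq_div_iff hk, mul_comm, eq_comm]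
  rw [sum_comm]
  simp_rw [map_add_eq_mul, ← sum_mul, sum_mulShift _ hψ, hroot]
  simp

theorem sum_addChar_div (hψ : ψ ≠ 1) (c : F) :
    ∑ u, ψ (c / u) = if c = 0 then (Fintype.card F : R) else 0 := by
  split_ifs with hc
  · simp [hc]
  · -- `c / 0 = 0`, so `u ↦ c / u` is an involution of all of `F`
    have hinv : Function.Involutive (c / · : F → F) := fun u => div_div_cancel₀ hc
    rw [Fintype.sum_bijective _ hinv.bijective _ ψ (fun _ => rfl), sum_eq_zero_of_ne_one hψ]

end CharacterSums

def traceAddChar (p : ℕ) [Fact p.Prime] (F : Type*) [Field F] [Fintype F] [CharP F p] :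
    AddChar F ℂ :=
  letI : Algebra (ZMod p) F := ZMod.algebra F p
  ZMod.stdAddChar.compAddMonoidHom (Algebra.trace (ZMod p) F).toAddMonoidHom

section TraceCharacter

variable (p : ℕ) [Fact p.Prime] [CharP F p]

theorem psiF_eq_traceAddChar (t : F) : psiF p F t = traceAddChar p F t := by
  let : Algebra (ZMod p) F := ZMod.algebra F p
  change _ = ZMod.stdAddChar (Algebra.trace (ZMod p) F t)
  rw [← ZMod.natCast_zmod_val (Algebra.trace (ZMod p) F t), ← Int.cast_natCast,
    ZMod.stdAddChar_coe, psiF]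
  push_cast
  rfl

theorem traceAddChar_ne_one : traceAddChar p F ≠ 1 := by
  let : Algebra (ZMod p) F := ZMod.algebra F p
  obtain ⟨b, hb⟩ : ∃ b : F, Algebra.trace (ZMod p) F b ≠ 0 := by
    by_contra! h
    exact one_ne_zero ((traceForm_nondegenerate (ZMod p) F).1 1 fun b => by simpa using h b)
  refine AddChar.ne_one_iff.2 ⟨b, fun h => hb (ZMod.injective_stdAddChar ?_)⟩
  simpa [traceAddChar] using h

end TraceCharacter

theorem qchar_eq_quadraticCharIn (a : F) : qchar a = quadraticCharIn ℂ a := by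
  by_cases h0 : a = 0
  · simp [qchar, h0]
  · by_cases hs : IsSquare a <;> simp [qchar, quadraticChar_apply, quadraticCharFun, h0, hs]

theorem Fintype.sum_fin_three_fun {α M : Type*} [Fintype α] [AddCommMonoid M]
    (f : (Fin 3 → α) → M) : ∑ x, f x = ∑ a, ∑ b, ∑ c, f ![a, b, c] := by
  rw [← (Fin.consEquiv fun _ => α).sum_comp, Fintype.sum_prod_type]
  refine Finset.sum_congr rfl fun a _ => ?_
  rw [← (finTwoArrowEquiv α).symm.sum_comp, Fintype.sum_prod_type]
  rfl

section BinaryQuadraticForms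

variable {R : Type*} [CommRing R] [IsDomain R] {ψ : AddChar F R}

theorem sum_addChar_disc_add_bform (hF : ringChar F ≠ 2) (hψ : ψ.IsPrimitive) {u : F}
    (hu : u ≠ 0) (y : Fin 3 → F) :
    ∑ x, ψ (u * DiscBQ x + bformBQ x y) =
      Fintype.card F * quadraticCharIn R u * gaussSum (quadraticCharIn R) ψ *
        ψ (-DiscBQ y / (16 * u)) := by
  have h2 : (2 : F) ≠ 0 := Ring.two_ne_zero hF
  have h4 : (4 : F) ≠ 0 := by simpa [show (4 : F) = 2 ^ 2 by norm_num] using h2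
  have h16 : (16 : F) ≠ 0 := by simpa [show (16 : F) = 2 ^ 4 by norm_num] using h2
  have hsplit (a b c : F) : u * DiscBQ ![a, b, c] + bformBQ ![a, b, c] y =
      (u * b ^ 2 + y 1 / 2 * b) + (a * (y 0 - 4 * u * c) + c * y 2) := by
    simp only [DiscBQ, bformBQ, Matrix.cons_val]
    ring
  calc ∑ x, ψ (u * DiscBQ x + bformBQ x y)
      = ∑ b, ψ (u * b ^ 2 + y 1 / 2 * b) * ∑ a, ∑ c, ψ (a * (y 0 - 4 * u * c) + c * y 2) := by
        simp_rw [Fintype.sum_fin_three_fun, hsplit, map_add_eq_mul, mul_sum]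
        exact sum_comm
    _ = quadraticCharIn R u * gaussSum (quadraticCharIn R) ψ * ψ (-(y 1 / 2) ^ 2 / (4 * u)) *
          (Fintype.card F * ψ (y 0 / (4 * u) * y 2)) := by
        rw [← sum_mul, sum_addChar_quadratic hF hψ hu,
          sum_sum_addChar_linear hψ (mul_ne_zero h4 hu)]
    _ = _ := by
        have hphase : -(y 1 / 2) ^ 2 / (4 * u) + y 0 / (4 * u) * y 2 = -DiscBQ y / (16 * u) := by
          rw [DiscBQ]
          field_simp
          ring
        rw [mul_mul_mul_comm, ← map_add_eq_mul, hphase]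
        ring

variable [CharZero R]

theorem sum_quadraticChar_disc_mul_addChar (hF : ringChar F ≠ 2) (hψ : ψ.IsPrimitive)
    (y : Fin 3 → F) :
    ∑ x, quadraticCharIn R (DiscBQ x) * ψ (bformBQ x y) =
      Fintype.card F * ((if DiscBQ y = 0 then (Fintype.card F : R) else 0) - 1) := by
  set χ := quadraticCharIn (F := F) R
  set q : R := (Fintype.card F : R)
  set g := gaussSum χ ψ
  have hg : g ≠ 0 := gaussSum_ne_zero_of_nontrivial (Nat.cast_ne_zero.2 Fintype.card_ne_zero)
    (quadraticCharIn_ne_one hF) hψ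
  have hterm (u : F) : χ u * ∑ x, ψ (u * DiscBQ x + bformBQ x y) =
      q * g * (ψ (-DiscBQ y / 16 / u) - if u = 0 then 1 else 0) := by
    by_cases hu : u = 0
    · simp [hu, χ]
    · have hχu : χ u * χ u = 1 := by
        rw [← map_mul, ← sq]
        simp [χ, quadraticChar_sq_one' hu]
      rw [sum_addChar_disc_add_bform hF hψ hu, if_neg hu, sub_zero, div_div]
      linear_combination (q * g * ψ (-DiscBQ y / (16 * u))) * hχu
  apply mul_left_cancel₀ hg
  calc g * ∑ x, χ (DiscBQ x) * ψ (bformBQ x y)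
      = ∑ x, (∑ u, χ u * ψ (u * DiscBQ x)) * ψ (bformBQ x y) := by
        rw [mul_sum]
        refine sum_congr rfl fun x _ => ?_
        rw [quadraticCharIn_isQuadratic.sum_mul_addChar_mul (quadraticCharIn_ne_one hF)]
        ring
    _ = ∑ u, χ u * ∑ x, ψ (u * DiscBQ x + bformBQ x y) := by
        simp_rw [sum_mul, map_add_eq_mul, mul_sum, mul_assoc]
        exact sum_comm
    _ = q * g * (∑ u, ψ (-DiscBQ y / 16 / u) - 1) := by
        simp_rw [hterm, ← mul_sum, sum_sub_distrib, sum_ite_eq', mem_univ, if_true]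
    _ = g * (q * ((if DiscBQ y = 0 then q else 0) - 1)) := by
        rw [sum_addChar_div (by simpa using hψ one_ne_zero)]
        have h16 : (16 : F) ≠ 0 := by
          simpa [show (16 : F) = 2 ^ 4 by norm_num] using Ring.two_ne_zero hF
        simp only [div_eq_zero_iff, neg_eq_zero, h16, or_false]
        ring

end BinaryQuadraticForms

theorem FTBQ_qchar_disc (p : ℕ) [Fact p.Prime] [CharP F p] (hF : ringChar F ≠ 2)
    (y : Fin 3 → F) :
    FTBQ p (fun x => qchar (DiscBQ x)) y =
      ((if DiscBQ y = 0 then (Fintype.card F : ℂ) else 0) - 1) / (Fintype.card F : ℂ) ^ 2 := by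
  have hq : (Fintype.card F : ℂ) ≠ 0 := Nat.cast_ne_zero.2 Fintype.card_ne_zero
  simp_rw [FTBQ, qchar_eq_quadraticCharIn, psiF_eq_traceAddChar,
    sum_quadraticChar_disc_mul_addChar hF (IsPrimitive.of_ne_one (traceAddChar_ne_one p))]
  field_simp

/-- Fourier transform of the quadratic character of the discriminant of
binary quadratic forms; it does not vanish on the singular set. -/
theorem stmt12 (p : ℕ) [Fact p.Prime] [CharP F p] (hp : p ≠ 2) :
    let Q : ℂ := (Fintype.card F : ℂ)
    (∀ y : Fin 3 → F,
      (DiscBQ y = 0 → FTBQ p (fun x => qchar (DiscBQ x)) y = 1/Q - 1/Q^2) ∧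
      (DiscBQ y ≠ 0 → FTBQ p (fun x => qchar (DiscBQ x)) y = -(1/Q^2))) ∧
    (∀ y : Fin 3 → F, DiscBQ y = 0 → FTBQ p (fun x => qchar (DiscBQ x)) y ≠ 0) := by
  dsimp only
  have hF : ringChar F ≠ 2 := by rwa [ringChar.eq F p]
  have hq : (Fintype.card F : ℂ) ≠ 0 := Nat.cast_ne_zero.2 Fintype.card_ne_zero
  have hq1 : (Fintype.card F : ℂ) - 1 ≠ 0 := sub_ne_zero.2 (mod_cast Fintype.one_lt_card.ne')
  refine ⟨fun y => ⟨fun hD => ?_, fun hD => ?_⟩, fun y hD => ?_⟩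
  · rw [FTBQ_qchar_disc p hF, if_pos hD]
    field_simp
  · rw [FTBQ_qchar_disc p hF, if_neg hD]
    ring
  · rw [FTBQ_qchar_disc p hF, if_pos hD]
    exact div_ne_zero hq1 (pow_ne_zero 2 hq)
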